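/- arXiv:1901.07639 — 5 statements merged into one kernel-verified Lean document; each statement's English description precedes it below -/
import Mathlib

section
/- For any nonzero z in the cyclotomic field Q(ζ_{2n}), if arg(z) is a rational multiple of π then arg(z) = kπ/(2n) for some integer k. In other words, elements of Q(ζ_{2n}) with rational argument lie on one of the 2n straight lines through 0 tilted by kπ/(2n) against the real axis. -/
/-!
For `z ≠ 0` the unit `z / conj z = exp (2 i arg z)` lies in `ℚ(ζ)`, since that field is stable
under complex conjugation (`conj ζ = ζ⁻¹`). When `arg z ∈ ℚπ` it is a root of unity, hence
`± ζ ^ k = ζ ^ j`, which determines `2 arg z` modulo `2π` as a multiple of `π / n`.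
-/

open Complex ComplexConjugate Real

theorem Algebra.inv_mem_adjoin_singleton {F E : Type*} [Field F] [Field E] [Algebra F E]
    {α : E} (hα : IsAlgebraic F α) {x : E} (hx : x ∈ Algebra.adjoin F {α}) :
    x⁻¹ ∈ Algebra.adjoin F {α} := by
  rw [← IntermediateField.adjoin_simple_toSubalgebra_of_isAlgebraic hα] at hx ⊢
  exact IntermediateField.inv_mem _ hx

namespace Complex

theorem conj_mem_adjoin_singleton {ζ : ℂ} (hζ : IsAlgebraic ℚ ζ) (hζ1 : ‖ζ‖ = 1) {x : ℂ}
    (hx : x ∈ Algebra.adjoin ℚ {ζ}) : conj x ∈ Algebra.adjoin ℚ {ζ} := by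
  have hmap : (Algebra.adjoin ℚ {ζ}).map (conjAe.toAlgHom.restrictScalars ℚ)
      ≤ Algebra.adjoin ℚ {ζ} := by
    rw [AlgHom.map_adjoin, Set.image_singleton, Algebra.adjoin_le_iff,
      Set.singleton_subset_iff]
    have : conj ζ = ζ⁻¹ := (inv_eq_conj hζ1).symm
    simpa [this] using Algebra.inv_mem_adjoin_singleton hζ (Algebra.self_mem_adjoin_singleton ℚ ζ)
  exact hmap ⟨x, hx, rfl⟩

theorem exp_two_mul_arg_mul_I {z : ℂ} (hz : z ≠ 0) : exp (2 * arg z * I) = z / conj z := by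
  have hnorm : (‖z‖ : ℂ) ≠ 0 := by exact_mod_cast norm_ne_zero_iff.mpr hz
  conv_rhs => rw [← norm_mul_exp_arg_mul_I z]
  rw [map_mul, conj_ofReal, ← exp_conj, map_mul, conj_ofReal, conj_I,
    mul_div_mul_left _ _ hnorm, ← exp_sub]
  ring_nf

theorem exp_rat_mul_two_pi_mul_I_pow_den (q : ℚ) : exp (q * (2 * π * I)) ^ q.den = 1 := by
  have hden : (q.den : ℂ) * q = q.num := by exact_mod_cast Rat.den_mul_eq_num q
  rw [← exp_nat_mul, ← mul_assoc, hden]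
  exact exp_int_mul_two_pi_mul_I q.num

theorem exists_int_eq_of_exp_mul_I_eq_zpow {m : ℕ} (hm : m ≠ 0) {θ : ℝ} {j : ℤ}
    (h : exp (θ * I) = exp (2 * π * I / m) ^ j) : ∃ k : ℤ, θ = k * (2 * π) / m := by
  rw [← exp_int_mul, exp_eq_exp_iff_exists_int] at h
  obtain ⟨t, ht⟩ := h
  refine ⟨j + m * t, ?_⟩
  have hm' : (m : ℝ) ≠ 0 := by exact_mod_cast hm
  have := congrArg im ht
  simp only [mul_im, ofReal_re, I_im, mul_one, ofReal_im, I_re, mul_zero, add_zero, add_im,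
    intCast_re, div_natCast_im, mul_re, re_ofNat, im_ofNat, sub_zero, zero_mul, intCast_im,
    div_natCast_re, sub_self, zero_div] at this
  field_simp at this ⊢
  push_cast
  linear_combination this

theorem exp_two_pi_mul_I_div_two_mul_pow {n : ℕ} (hn : n ≠ 0) :
    exp (2 * π * I / (2 * n)) ^ n = -1 := by
  have h := (isPrimitiveRoot_exp (2 * n) (by omega)).pow_of_dvd hn (dvd_mul_left n 2)
  rw [Nat.mul_div_cancel _ (Nat.pos_of_ne_zero hn)] at h
  push_cast at h
  exact h.eq_neg_one_of_two_right

end Complex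

/-- Any nonzero `z ∈ ℚ(ζ_{2n})` with rational argument has argument an integer
multiple of `π/(2n)`.  We assume (as in the paper's context) that the roots of unity
in `ℚ(ζ_{2n})` are exactly `± ζ_{2n}^k`. -/
theorem stmt2 (n : ℕ) (hn : 1 ≤ n)
    (ζ : ℂ) (hζ : ζ = Complex.exp (2 * Real.pi * Complex.I / (2 * n)))
    (hru : ∀ w : ℂ, w ∈ Algebra.adjoin ℚ {ζ} → (∃ m : ℕ, 0 < m ∧ w ^ m = 1) →
      ∃ k : ℤ, w = ζ ^ k ∨ w = -ζ ^ k)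
    (z : ℂ) (hz : z ∈ Algebra.adjoin ℚ {ζ}) (hz0 : z ≠ 0)
    (harg : ∃ q : ℚ, z.arg = q * Real.pi) :
    ∃ k : ℤ, z.arg = k * Real.pi / (2 * n) := by
  obtain ⟨q, hq⟩ := harg
  have h2n : 2 * n ≠ 0 := by omega
  have hprim : IsPrimitiveRoot ζ (2 * n) := by
    rw [hζ]; exact_mod_cast isPrimitiveRoot_exp (2 * n) h2n
  have hζ_alg : IsAlgebraic ℚ ζ := (hprim.isIntegral (by omega)).tower_top.isAlgebraic
  have hw_mem : exp (2 * arg z * I) ∈ Algebra.adjoin ℚ {ζ} := by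
    rw [exp_two_mul_arg_mul_I hz0, div_eq_mul_inv]
    exact mul_mem hz (Algebra.inv_mem_adjoin_singleton hζ_alg
      (conj_mem_adjoin_singleton hζ_alg (hprim.norm'_eq_one h2n) hz))
  have hw_root : ∃ m : ℕ, 0 < m ∧ exp (2 * arg z * I) ^ m = 1 := by
    refine ⟨q.den, q.pos, ?_⟩
    convert exp_rat_mul_two_pi_mul_I_pow_den q using 3
    rw [hq]; push_cast; ring
  have hw_zpow : ∃ j : ℤ, exp (↑(2 * arg z) * I) = exp (2 * π * I / ↑(2 * n)) ^ j := by
    obtain ⟨j, hj | hj⟩ := hru _ hw_mem hw_root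
    · exact ⟨j, by push_cast; rw [← hζ, hj]⟩
    · refine ⟨j + n, ?_⟩
      rw [zpow_add₀ (Complex.exp_ne_zero _), zpow_natCast]
      push_cast
      rw [exp_two_pi_mul_I_div_two_mul_pow (by omega), ← hζ, hj]
      ring
  obtain ⟨j, hj⟩ := hw_zpow
  obtain ⟨k, hk⟩ := exists_int_eq_of_exp_mul_I_eq_zpow h2n hj
  refine ⟨k, ?_⟩
  push_cast at hk
  linarith [show (k : ℝ) * (2 * π) / (2 * n) = 2 * (k * π / (2 * n)) by ring]
end

section
/- For n ∈ {2, 3}, the complex number η = 2 + ζ_{2n} (with ζ_4 = i or ζ_6 = e^{iπ/3}) has irrational argument: arg(2 + ζ_{2n}) is not a rational multiple of π. -/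
/-!
If `arg z = q π` with `q` rational, then `z ^ (2 * q.den)` is real. Up to a positive real factor,
`2 + i` and `2 + ζ₆` are the images in `ℂ` of `2 + √-1 ∈ ℤ[√-1]` and `5 + √-3 ∈ ℤ[√-3]`, so some
positive power of these would have vanishing `√-k`-coordinate. Such an element has the same image
under the two maps `√-k ↦ ±s` into `𝔽_p` (with `s² = -k`; `p = 5`, resp. `p = 7`), whereas one of
these maps kills `2 + √-1`, resp. `5 + √-3`, and the other does not.
-/

open Complex

theorem Complex.im_pow_two_mul_den_eq_zero {z : ℂ} {q : ℚ} (h : z.arg = q * Real.pi) :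
    (z ^ (2 * q.den)).im = 0 := by
  have hangle : ((2 * q.den : ℕ) : ℂ) * z.arg = ((2 * q.num : ℤ) * Real.pi : ℝ) := by
    have hnum : (q.num : ℂ) = q * q.den := by exact_mod_cast (Rat.mul_den_eq_num q).symm
    rw [h]; push_cast; rw [hnum]; ring
  rw [← norm_mul_cos_add_sin_mul_I z, mul_pow, cos_add_sin_mul_I_pow, hangle, ← ofReal_cos,
    ← ofReal_sin, Real.sin_int_mul_pi, ofReal_zero, zero_mul, add_zero, ← ofReal_pow,
    ← ofReal_mul, ofReal_im]

namespace Zsqrtd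

theorem im_pow_ne_zero {R : Type*} [CommRing R] [IsDomain R] {d : ℤ} {s : R}
    (hs : s * s = d) {z : ℤ√d} (h₀ : (z.re : R) + z.im * s = 0)
    (h₁ : (z.re : R) - z.im * s ≠ 0) {n : ℕ} (hn : n ≠ 0) : (z ^ n).im ≠ 0 := by
  set f := lift ⟨s, hs⟩
  set g := lift ⟨-s, by rw [neg_mul_neg, hs]⟩
  have hf : f (z ^ n) = 0 := by
    rw [map_pow]; exact (pow_eq_zero_iff hn).mpr (by simpa [f] using h₀)
  have hg : g (z ^ n) ≠ 0 := by
    rw [map_pow]; exact pow_ne_zero n (by simpa [g, sub_eq_add_neg] using h₁)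
  intro him
  apply hg
  simpa [f, g, him] using hf

noncomputable def toComplex (k : ℕ) : ℤ√(-k) →+* ℂ :=
  lift ⟨Real.sqrt k * I, by
    rw [mul_mul_mul_comm, I_mul_I, ← ofReal_mul, Real.mul_self_sqrt k.cast_nonneg]; push_cast; ring⟩

theorem toComplex_im (k : ℕ) (z : ℤ√(-k)) : (toComplex k z).im = z.im * Real.sqrt k := by
  simp [toComplex]

theorem not_exists_arg_toComplex_eq_rat_mul_pi {R : Type*} [CommRing R] [IsDomain R] {k : ℕ}
    (hk : k ≠ 0) {s : R} (hs : s * s = (-k : ℤ)) {z : ℤ√(-k)} (h₀ : (z.re : R) + z.im * s = 0)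
    (h₁ : (z.re : R) - z.im * s ≠ 0) : ¬ ∃ q : ℚ, (toComplex k z).arg = q * Real.pi := by
  rintro ⟨q, hq⟩
  have him := Complex.im_pow_two_mul_den_eq_zero hq
  rw [← map_pow, toComplex_im, mul_eq_zero, Int.cast_eq_zero] at him
  refine him.elim (im_pow_ne_zero hs h₀ h₁ (by positivity)) ?_
  positivity

end Zsqrtd

instance Nat.fact_prime_five : Fact (Nat.Prime 5) := ⟨by norm_num⟩

instance Nat.fact_prime_seven : Fact (Nat.Prime 7) := ⟨by norm_num⟩

/-- For `n ∈ {2,3}`, the number `2 + ζ_{2n}` has irrational argument. -/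
theorem stmt8 :
    (¬ ∃ q : ℚ, (2 + Complex.I).arg = q * Real.pi) ∧
    (¬ ∃ q : ℚ, (2 + Complex.exp (Real.pi * Complex.I / 3)).arg = q * Real.pi) := by
  constructor
  · have h : 2 + I = Zsqrtd.toComplex 1 ⟨2, 1⟩ := by
      simp [Zsqrtd.toComplex]
    rw [h]
    exact Zsqrtd.not_exists_arg_toComplex_eq_rat_mul_pi (R := ZMod 5) (s := 3) one_ne_zero
      (by decide) (by decide) (by decide)
  · have h : 2 + exp (Real.pi * I / 3) = (1 / 2 : ℝ) * Zsqrtd.toComplex 3 ⟨5, 1⟩ := by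
      rw [show (Real.pi : ℂ) * I / 3 = ((Real.pi / 3 : ℝ) : ℂ) * I by push_cast; ring,
        exp_mul_I, ← ofReal_cos, ← ofReal_sin, Real.cos_pi_div_three, Real.sin_pi_div_three]
      simp [Zsqrtd.toComplex]; ring
    rw [h, arg_real_mul _ (by norm_num)]
    exact Zsqrtd.not_exists_arg_toComplex_eq_rat_mul_pi (R := ZMod 7) (s := 2) three_ne_zero
      (by decide) (by decide) (by decide)
end

section
/- The Eisenstein integer η = 2 + ζ_6, where ζ_6 = e^{iπ/3}, satisfies η·conj(η) = 7 (i.e. |η|² = 7), and η/conj(η) is not a root of unity. -/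
open Complex

private def ab : ℕ → ℤ × ℤ
  | 0 => (1, 0)
  | n+1 => (2 * (ab n).1 - (ab n).2, (ab n).1 + 3 * (ab n).2)

private def Sset : Finset (ZMod 7 × ZMod 7) :=
  {(2,1),(3,5),(1,4),(5,6),(4,2),(6,3)}

private lemma mem_Sset : ∀ n, (((ab (n+1)).1 : ZMod 7), ((ab (n+1)).2 : ZMod 7)) ∈ Sset := by
  intro n
  induction n with
  | zero => decide
  | succ k ih =>
    have hstep : ∀ p ∈ Sset, ((2*p.1 - p.2 : ZMod 7), (p.1 + 3*p.2 : ZMod 7)) ∈ Sset := by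
      decide
    have h := hstep _ ih
    have hdef : ab (k+1+1) = (2 * (ab (k+1)).1 - (ab (k+1)).2, (ab (k+1)).1 + 3 * (ab (k+1)).2) := rfl
    rw [hdef]
    push_cast
    simpa using h

private lemma Sset_snd_ne : ∀ p ∈ Sset, p.2 ≠ 0 := by decide

private lemma pow_eq (ζ : ℂ) (hζ2 : ζ ^ 2 = ζ - 1) :
    ∀ n, (2 + ζ) ^ n = ((ab n).1 : ℂ) + ((ab n).2 : ℂ) * ζ := by
  intro n
  induction n with
  | zero => simp [ab]
  | succ k ih =>
    rw [pow_succ, ih]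
    simp only [ab]
    push_cast
    linear_combination ((ab k).2 : ℂ) * hζ2

/-- `η = 2 + ζ₆` satisfies `η * conj η = 7` and `η / conj η` is not a root of unity. -/
theorem stmt10 (ζ : ℂ) (hζ : ζ = Complex.exp (Real.pi * Complex.I / 3)) :
    (2 + ζ) * (starRingEnd ℂ) (2 + ζ) = 7 ∧
    ¬ ∃ m : ℕ, 0 < m ∧ ((2 + ζ) / (starRingEnd ℂ) (2 + ζ)) ^ m = 1 := by
  have hζ' : ζ = (1/2 : ℝ) + (Real.sqrt 3 / 2 : ℝ) * I := by
    rw [hζ, show (Real.pi * Complex.I / 3 : ℂ) = ((Real.pi/3 : ℝ) : ℂ) * I by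
      push_cast; ring, Complex.exp_mul_I, ← Complex.ofReal_cos, ← Complex.ofReal_sin,
      Real.cos_pi_div_three, Real.sin_pi_div_three]
  have h3c : ((Real.sqrt 3 : ℂ)) ^ 2 = 3 := by
    rw [← Complex.ofReal_pow, Real.sq_sqrt (by norm_num : (3:ℝ) ≥ 0)]
    norm_num
  have hζ2 : ζ ^ 2 = ζ - 1 := by
    rw [hζ']
    push_cast
    linear_combination (Complex.I ^ 2 / 4) * h3c + (3/4 : ℂ) * Complex.I_sq
  have hconj : (starRingEnd ℂ) (2 + ζ) = (2 : ℂ) + (1/2 : ℝ) - (Real.sqrt 3 / 2 : ℝ) * I := by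
    rw [hζ']
    simp only [map_add, map_mul, map_ofNat, Complex.conj_ofReal, Complex.conj_I]
    ring
  constructor
  · rw [hconj, hζ']
    push_cast
    linear_combination (-(Complex.I ^ 2) / 4) * h3c - (3/4 : ℂ) * Complex.I_sq
  · rintro ⟨m, hm, hpow⟩
    have hne : (starRingEnd ℂ) (2 + ζ) ≠ 0 := by
      rw [hconj]
      intro h
      have := congrArg Complex.re h
      simp at this
      norm_num at this
    have heq : (2 + ζ) ^ m = ((starRingEnd ℂ) (2 + ζ)) ^ m := by
      rw [div_pow, div_eq_one_iff_eq (pow_ne_zero m hne)] at hpow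
      exact hpow
    have hreal : ((2 + ζ) ^ m).im = 0 := by
      have : (starRingEnd ℂ) ((2 + ζ) ^ m) = (2 + ζ) ^ m := by
        rw [map_pow, ← heq]
      exact (Complex.conj_eq_iff_im.mp this)
    rw [pow_eq ζ hζ2 m, hζ'] at hreal
    simp [Complex.add_im, Complex.mul_im] at hreal
    have hb : (ab m).2 = 0 := hreal
    obtain ⟨k, rfl⟩ : ∃ k, m = k + 1 := ⟨m - 1, by omega⟩
    have := Sset_snd_ne _ (mem_Sset k)
    rw [hb] at this
    simp at this
end

section
/- For every odd n ≥ 5, the element η = 1 + ζ_{2n} + ζ_{2n}^{(n+1)/2} of ℤ[ζ_{2n}] satisfies η·conj(η) = 3 + ζ_{2n} + conj(ζ_{2n}) = 3 + 2cos(π/n). -/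
open Complex

/-- For odd `n ≥ 5`, `η = 1 + ζ_{2n} + ζ_{2n}^{(n+1)/2}` satisfies
`η * conj η = 3 + ζ_{2n} + conj ζ_{2n} = 3 + 2cos(π/n)`. -/
theorem stmt13 (n : ℕ) (hn : 5 ≤ n) (hodd : Odd n)
    (ζ : ℂ) (hζ : ζ = Complex.exp (Real.pi * Complex.I / n)) :
    (1 + ζ + ζ ^ ((n + 1) / 2)) * (starRingEnd ℂ) (1 + ζ + ζ ^ ((n + 1) / 2))
      = 3 + ζ + (starRingEnd ℂ) ζ ∧
    (1 + ζ + ζ ^ ((n + 1) / 2)) * (starRingEnd ℂ) (1 + ζ + ζ ^ ((n + 1) / 2))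
      = 3 + 2 * (Real.cos (Real.pi / n) : ℝ) := by
  obtain ⟨k, hk⟩ := hodd
  set c := (starRingEnd ℂ) ζ with hc
  have hn0 : (n : ℂ) ≠ 0 := by
    exact_mod_cast Nat.cast_ne_zero.mpr (by omega)
  have hz0 : ζ ≠ 0 := by rw [hζ]; exact Complex.exp_ne_zero _
  have hzc : ζ * c = 1 := by
    rw [hc, hζ, ← Complex.exp_conj, ← Complex.exp_add]
    rw [show ((Real.pi : ℂ) * Complex.I / n + (starRingEnd ℂ) (Real.pi * Complex.I / n)) =
      ((Real.pi : ℂ) * Complex.I / n + (Real.pi : ℂ) * (-Complex.I) / n) by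
        simp [map_div₀, Complex.conj_I]]
    rw [show ((Real.pi : ℂ) * Complex.I / n + (Real.pi : ℂ) * (-Complex.I) / n) = 0 by ring]
    exact Complex.exp_zero
  have hpow : ζ ^ (2 * k + 1) = -1 := by
    rw [hζ, ← Complex.exp_nat_mul]
    rw [show ((2 * k + 1 : ℕ) : ℂ) * ((Real.pi : ℂ) * Complex.I / n) =
      ((Real.pi : ℂ) * Complex.I) * (((2 * k + 1 : ℕ) : ℂ) / n) by ring]
    rw [show ((2 * k + 1 : ℕ) : ℂ) = (n : ℂ) by norm_cast; omega]
    rw [div_self hn0, mul_one, Complex.exp_pi_mul_I]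
  have hm : (n + 1) / 2 = k + 1 := by omega
  rw [hm]
  have hconjpow : (starRingEnd ℂ) (ζ ^ (k + 1)) = c ^ (k + 1) := map_pow _ _ _
  have h1 : c ^ (k + 1) * ζ ^ (k + 1) = 1 := by
    rw [← mul_pow, mul_comm c ζ, hzc, one_pow]
  have h2 : (-ζ ^ k) * ζ ^ (k + 1) = 1 := by
    have h3 : ζ ^ k * ζ ^ (k + 1) = ζ ^ (2 * k + 1) := by
      rw [← pow_add]; ring_nf
    linear_combination -hpow - h3
  have hck : c ^ (k + 1) = -ζ ^ k :=
    mul_right_cancel₀ (pow_ne_zero _ hz0) (h1.trans h2.symm)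
  have first : (1 + ζ + ζ ^ (k + 1)) * (starRingEnd ℂ) (1 + ζ + ζ ^ (k + 1))
      = 3 + ζ + c := by
    have h3 : ζ ^ k * ζ ^ (k + 1) = ζ ^ (2 * k + 1) := by rw [← pow_add]; ring_nf
    rw [map_add, map_add, map_one, hconjpow, hck, ← hc]
    linear_combination (1 + ζ ^ k) * hzc - hpow + h3
  refine ⟨first, ?_⟩
  have hre : ζ + c = 2 * (Real.cos (Real.pi / n) : ℝ) := by
    have hζ' : ζ = Complex.exp ((Real.pi / n : ℝ) * Complex.I) := by
      rw [hζ]; push_cast; ring_nf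
    rw [hc, Complex.add_conj, hζ', Complex.exp_ofReal_mul_I_re]; push_cast; ring
  linear_combination first + hre
end

section
/- For every even n ≥ 10 with n ≡ 2 (mod 4), the element η = 1 + ζ_{2n} + ζ_{2n}^{(n+2)/4} + ζ_{2n}^{(3n+2)/4} of ℤ[ζ_{2n}] satisfies η·conj(η) = 4 + ζ_{2n} + conj(ζ_{2n}) = 4 + 2cos(π/n). -/
open Complex ComplexConjugate

/-!
Write `n = 2m` with `m` odd, so that `ζ ^ m = I`. With `w = ζ ^ ((n + 2) / 4)`, a unit complex
number, one gets `ζ ^ ((3n + 2) / 4) = I * w` and `w ^ 2 = I * ζ`, hence `η = (1 + ζ) + (1 + I) w`.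
In `η * conj η` the squares give `|1 + ζ|² + |1 + I|² = 4 + ζ + conj ζ`, while, as `ζ = -I w²`,
the cross term `(1 + ζ)(1 - I) conj w = (1 - I) conj w - (1 + I) w` is purely imaginary and
cancels against its conjugate.
-/

lemma exp_pi_mul_I_div_two_mul_pow_self {m : ℕ} (hm : m ≠ 0) :
    exp (Real.pi * I / (2 * m)) ^ m = I := by
  rw [← exp_nat_mul]
  convert exp_pi_div_two_mul_I using 2
  field_simp

lemma norm_eq_one_of_pow_eq_I {ζ : ℂ} {m : ℕ} (hm : m ≠ 0) (hζ : ζ ^ m = I) : ‖ζ‖ = 1 := by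
  rw [← pow_eq_one_iff_of_nonneg (norm_nonneg ζ) hm, ← norm_pow, hζ, norm_I]

lemma mul_conj_one_add_add_I_mul_eq {ζ w : ℂ} (hw : ‖w‖ = 1) (hζ : w ^ 2 = I * ζ) :
    (1 + ζ + w + I * w) * conj (1 + ζ + w + I * w) = 4 + ζ + conj ζ := by
  have hw_conj : w * conj w = 1 := by
    rw [mul_conj, normSq_eq_norm_sq, hw]; norm_num
  obtain rfl : ζ = -I * w ^ 2 := by linear_combination I * hζ + ζ * I_sq
  simp only [map_add, map_mul, map_neg, map_pow, map_one, conj_I]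
  linear_combination (3 + w * conj w + I * conj w - conj w - I * w - w) * hw_conj
    + (w ^ 2 * conj w + w * conj w ^ 2 - w * conj w - w ^ 2 * conj w ^ 2) * I_sq

theorem stmt14_general (n : ℕ) (hmod : n % 4 = 2)
    (ζ : ℂ) (hζ : ζ = Complex.exp (Real.pi * Complex.I / n)) :
    (1 + ζ + ζ ^ ((n + 2) / 4) + ζ ^ ((3 * n + 2) / 4)) *
        (starRingEnd ℂ) (1 + ζ + ζ ^ ((n + 2) / 4) + ζ ^ ((3 * n + 2) / 4))
      = 4 + ζ + (starRingEnd ℂ) ζ ∧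
    (1 + ζ + ζ ^ ((n + 2) / 4) + ζ ^ ((3 * n + 2) / 4)) *
        (starRingEnd ℂ) (1 + ζ + ζ ^ ((n + 2) / 4) + ζ ^ ((3 * n + 2) / 4))
      = 4 + 2 * (Real.cos (Real.pi / n) : ℝ) := by
  have hcos : ζ + conj ζ = 2 * (Real.cos (Real.pi / n) : ℝ) := by
    rw [add_conj, hζ, show (Real.pi : ℂ) * I / n = ↑(Real.pi / n) * I by push_cast; ring,
      exp_ofReal_mul_I_re]
    push_cast; ring
  obtain ⟨k, rfl⟩ : ∃ k, n = 2 * (2 * k + 1) := ⟨n / 4, by omega⟩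
  have hm : 2 * k + 1 ≠ 0 := by omega
  have hI : ζ ^ (2 * k + 1) = I := by
    rw [hζ, Nat.cast_mul, Nat.cast_ofNat]
    exact exp_pi_mul_I_div_two_mul_pow_self hm
  have hnorm : ‖ζ ^ (k + 1)‖ = 1 := by rw [norm_pow, norm_eq_one_of_pow_eq_I hm hI, one_pow]
  have hsq : (ζ ^ (k + 1)) ^ 2 = I * ζ := by
    rw [← pow_mul, show (k + 1) * 2 = 2 * k + 1 + 1 by ring, pow_succ, hI]
  rw [show (2 * (2 * k + 1) + 2) / 4 = k + 1 by omega,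
    show (3 * (2 * (2 * k + 1)) + 2) / 4 = 2 * k + 1 + (k + 1) by omega, pow_add ζ (2 * k + 1), hI]
  have key := mul_conj_one_add_add_I_mul_eq hnorm hsq
  exact ⟨key, by rw [key, add_assoc, hcos]⟩

/-- For even `n ≥ 10` with `n ≡ 2 (mod 4)`,
`η = 1 + ζ_{2n} + ζ_{2n}^{(n+2)/4} + ζ_{2n}^{(3n+2)/4}` satisfies
`η * conj η = 4 + ζ_{2n} + conj ζ_{2n} = 4 + 2cos(π/n)`. -/
theorem stmt14 (n : ℕ) (hn : 10 ≤ n) (hmod : n % 4 = 2)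
    (ζ : ℂ) (hζ : ζ = Complex.exp (Real.pi * Complex.I / n)) :
    (1 + ζ + ζ ^ ((n + 2) / 4) + ζ ^ ((3 * n + 2) / 4)) *
        (starRingEnd ℂ) (1 + ζ + ζ ^ ((n + 2) / 4) + ζ ^ ((3 * n + 2) / 4))
      = 4 + ζ + (starRingEnd ℂ) ζ ∧
    (1 + ζ + ζ ^ ((n + 2) / 4) + ζ ^ ((3 * n + 2) / 4)) *
        (starRingEnd ℂ) (1 + ζ + ζ ^ ((n + 2) / 4) + ζ ^ ((3 * n + 2) / 4))
      = 4 + 2 * (Real.cos (Real.pi / n) : ℝ) :=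
  stmt14_general n hmod ζ hζ
end
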